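/- Let n ≥ 1, let z₁, …, z_n be the n distinct real zeros of the physicists' Hermite function H_n, and let w_j = 2^{n−1} · n! · √π / (n² · H_{n−1}(z_j)²). Then each w_j > 0 and ∑_{j=1}^n w_j = √π. -/

import Mathlib

/-!
As a polynomial, `H_n` satisfies `H_{n+1} = 2X H_n − H_n'` and `H_{n+1}' = 2(n+1) H_n`. Let
`L p = π^{-1/2} ∫ p e^{−x²}`; integration by parts gives `L(p H_k) = L(p^{(k)})`, which vanishes
when `deg p < k` and is `k!` times the `X^k`-coefficient when `deg p ≤ k`. For a root `z` of
`H_{m+1}` put `q = H_{m+1} / (X − z)`, of degree `m` and leading coefficient `2^{m+1}`. Writing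
`H_m = H_m(z) + (X − z) r` gives `q H_m = H_m(z) q + r H_{m+1}`, hence
`H_m(z) L(q) = L(q H_m) = 2^{m+1} m!`. So `H_m(z) ≠ 0`, the roots are simple, and
`w_j / √π = L(q_j / H_{m+1}'(z_j))` is `L` of the `j`-th Lagrange basis polynomial at the roots;
these basis polynomials sum to `1`, and `L 1 = 1`.
-/

/-- The physicists' Hermite function, defined by the Rodrigues formula
`H_n(x) = (−1)^n e^{x²} (d^n/dx^n) e^{−x²}`. -/
noncomputable def physHermite (n : ℕ) (x : ℝ) : ℝ :=
  (-1) ^ n * Real.exp (x ^ 2) * iteratedDeriv n (fun t : ℝ => Real.exp (-t ^ 2)) x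

open Polynomial

noncomputable def physHermitePoly : ℕ → ℝ[X]
  | 0 => 1
  | n + 1 => 2 * X * physHermitePoly n - derivative (physHermitePoly n)

lemma physHermitePoly_succ (n : ℕ) :
    physHermitePoly (n + 1) = 2 * X * physHermitePoly n - derivative (physHermitePoly n) :=
  rfl

lemma derivative_physHermitePoly_succ (n : ℕ) :
    derivative (physHermitePoly (n + 1)) = 2 * (n + 1 : ℝ[X]) * physHermitePoly n := by
  induction n with
  | zero => simp [physHermitePoly]
  | succ n ih =>
    rw [physHermitePoly_succ (n + 1), derivative_sub, derivative_mul, ih, derivative_mul]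
    simp only [derivative_mul, derivative_ofNat, derivative_X, derivative_add,
      derivative_natCast, derivative_one]
    push_cast
    linear_combination (-2 * (n + 1 : ℝ[X])) * physHermitePoly_succ n

lemma natDegree_physHermitePoly_le (n : ℕ) : (physHermitePoly n).natDegree ≤ n := by
  induction n with
  | zero => simp [physHermitePoly]
  | succ n ih =>
    rw [physHermitePoly_succ]
    refine (natDegree_sub_le _ _).trans (max_le ?_ ?_)
    · refine natDegree_mul_le.trans ?_
      have : (2 * X : ℝ[X]).natDegree ≤ 1 := natDegree_mul_le.trans (by simp)
      omega
    · exact (natDegree_derivative_le _).trans (by omega)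

lemma coeff_physHermitePoly_self (n : ℕ) : (physHermitePoly n).coeff n = 2 ^ n := by
  induction n with
  | zero => simp [physHermitePoly]
  | succ n ih =>
    have hder : (derivative (physHermitePoly n)).coeff (n + 1) = 0 :=
      coeff_eq_zero_of_natDegree_lt <|
        (natDegree_derivative_le _).trans_lt (by have := natDegree_physHermitePoly_le n; omega)
    rw [physHermitePoly_succ, coeff_sub, hder, mul_assoc, coeff_ofNat_mul, X_mul, coeff_mul_X,
      ih, pow_succ]
    ring

lemma natDegree_physHermitePoly (n : ℕ) : (physHermitePoly n).natDegree = n :=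
  natDegree_eq_of_le_of_coeff_ne_zero (natDegree_physHermitePoly_le n)
    (by rw [coeff_physHermitePoly_self]; positivity)

lemma leadingCoeff_physHermitePoly (n : ℕ) : (physHermitePoly n).leadingCoeff = 2 ^ n := by
  rw [leadingCoeff, natDegree_physHermitePoly, coeff_physHermitePoly_self]

lemma hasDerivAt_exp_neg_sq (x : ℝ) :
    HasDerivAt (fun t : ℝ => Real.exp (-t ^ 2)) (-2 * x * Real.exp (-x ^ 2)) x := by
  have h : HasDerivAt (fun t : ℝ => -t ^ 2) (-(2 * x)) x :=
    (hasDerivAt_pow 2 x).neg.congr_deriv (by simp)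
  simpa [mul_comm] using h.exp

lemma iteratedDeriv_exp_neg_sq (n : ℕ) (x : ℝ) :
    iteratedDeriv n (fun t : ℝ => Real.exp (-t ^ 2)) x
      = (-1) ^ n * Real.exp (-x ^ 2) * (physHermitePoly n).eval x := by
  induction n generalizing x with
  | zero => simp [physHermitePoly]
  | succ n ih =>
    rw [iteratedDeriv_succ, funext ih]
    refine ((((hasDerivAt_exp_neg_sq x).const_mul ((-1 : ℝ) ^ n)).mul
      ((physHermitePoly n).hasDerivAt x)).congr_deriv ?_).deriv
    simp [physHermitePoly_succ, pow_succ]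
    ring

lemma physHermite_eq_eval (n : ℕ) (x : ℝ) : physHermite n x = (physHermitePoly n).eval x := by
  have hexp : Real.exp (x ^ 2) * Real.exp (-x ^ 2) = 1 := by rw [← Real.exp_add]; simp
  have hsign : ((-1 : ℝ) ^ n) ^ 2 = 1 := by rw [← pow_mul, mul_comm, pow_mul, neg_one_sq, one_pow]
  rw [physHermite, iteratedDeriv_exp_neg_sq]
  linear_combination (physHermitePoly n).eval x * (((-1) ^ n) ^ 2 * hexp + hsign)

noncomputable def gaussMoment : ℕ → ℝ
  | 0 => 1
  | 1 => 0
  | m + 2 => (m + 1) / 2 * gaussMoment m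

/-- The normalized Gaussian integral `p ↦ π^{-1/2} ∫ p(x) e^{-x²} dx`, encoded by the moments
`gaussMoment m = π^{-1/2} ∫ x^m e^{-x²} dx`, whose recursion is integration by parts. -/
noncomputable def gaussFunctional : ℝ[X] →ₗ[ℝ] ℝ :=
  lsum fun m => gaussMoment m • LinearMap.id

lemma gaussFunctional_monomial (m : ℕ) (a : ℝ) :
    gaussFunctional (monomial m a) = gaussMoment m * a := by
  simp [gaussFunctional, sum_monomial_index]

lemma gaussFunctional_C (a : ℝ) : gaussFunctional (C a) = a := by
  simpa [gaussMoment] using gaussFunctional_monomial 0 a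

lemma gaussFunctional_one : gaussFunctional 1 = 1 := by
  simpa using gaussFunctional_C 1

lemma gaussFunctional_derivative (p : ℝ[X]) :
    gaussFunctional (derivative p) = 2 * gaussFunctional (X * p) := by
  induction p using Polynomial.induction_on' with
  | add p q hp hq => simp only [mul_add, map_add, hp, hq]
  | monomial m a =>
    rw [derivative_monomial, X_mul_monomial, gaussFunctional_monomial, gaussFunctional_monomial]
    cases m with
    | zero => simp [gaussMoment]
    | succ m =>
      simp only [gaussMoment, Nat.add_sub_cancel]
      push_cast
      ring

lemma gaussFunctional_mul_physHermitePoly_succ (p : ℝ[X]) (k : ℕ) :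
    gaussFunctional (p * physHermitePoly (k + 1)) =
      gaussFunctional (derivative p * physHermitePoly k) := by
  have h := gaussFunctional_derivative (p * physHermitePoly k)
  rw [derivative_mul, map_add] at h
  rw [physHermitePoly_succ, mul_sub, map_sub,
    show p * (2 * X * physHermitePoly k) = (2 : ℝ) • (X * (p * physHermitePoly k)) by
      rw [two_smul]; ring,
    map_smul, smul_eq_mul]
  linear_combination -h

lemma gaussFunctional_mul_physHermitePoly (p : ℝ[X]) (k : ℕ) :
    gaussFunctional (p * physHermitePoly k) = gaussFunctional (derivative^[k] p) := by
  induction k generalizing p with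
  | zero => simp [physHermitePoly]
  | succ k ih =>
    rw [gaussFunctional_mul_physHermitePoly_succ, ih, Function.iterate_succ_apply]

lemma gaussFunctional_mul_physHermitePoly_of_natDegree_lt {p : ℝ[X]} {k : ℕ}
    (hp : p.natDegree < k) : gaussFunctional (p * physHermitePoly k) = 0 := by
  rw [gaussFunctional_mul_physHermitePoly, iterate_derivative_eq_zero hp, map_zero]

lemma gaussFunctional_mul_physHermitePoly_of_natDegree_le {p : ℝ[X]} {k : ℕ}
    (hp : p.natDegree ≤ k) :
    gaussFunctional (p * physHermitePoly k) = k.factorial * p.coeff k := by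
  have hdeg : (derivative^[k] p).natDegree = 0 :=
    Nat.eq_zero_of_le_zero <| (natDegree_iterate_derivative p k).trans (by omega)
  rw [gaussFunctional_mul_physHermitePoly, eq_C_of_natDegree_eq_zero hdeg, gaussFunctional_C,
    coeff_iterate_derivative, zero_add, Nat.descFactorial_self, nsmul_eq_mul]

theorem sum_C_inv_eval_derivative_mul_divByMonic_eq_one {K ι : Type*} [Field K] [Fintype ι]
    [Nonempty ι] {P : K[X]} {z : ι → K} (hz : Function.Injective z)
    (hroot : ∀ i, P.IsRoot (z i)) (hdeg : P.natDegree ≤ Fintype.card ι)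
    (hsimple : ∀ i, (derivative P).eval (z i) ≠ 0) :
    ∑ i, C ((derivative P).eval (z i))⁻¹ * (P /ₘ (X - C (z i))) = 1 := by
  have hq_self (i : ι) : (P /ₘ (X - C (z i))).eval (z i) = (derivative P).eval (z i) := by
    simpa using congrArg (eval (z i))
      (divByMonic_add_X_sub_C_mul_derivative_divByMonic_eq_derivative P (z i))
  have hq_ne {i j : ι} (hij : i ≠ j) : (P /ₘ (X - C (z j))).eval (z i) = 0 := by
    have h := congrArg (eval (z i)) (mul_divByMonic_eq_iff_isRoot.2 (hroot j))
    rw [eval_mul, (hroot i).eq_zero] at h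
    simpa [sub_eq_zero, hz.ne hij] using h
  have hcard : 0 < Fintype.card ι := Fintype.card_pos
  have hq_deg (i : ι) : (P /ₘ (X - C (z i))).degree < Fintype.card ι := by
    have h : (P /ₘ (X - C (z i))).natDegree < Fintype.card ι := by
      rw [natDegree_divByMonic _ (monic_X_sub_C _), natDegree_X_sub_C]
      omega
    exact degree_le_natDegree.trans_lt (by exact_mod_cast h)
  refine eq_of_degrees_lt_of_eval_index_eq Finset.univ hz.injOn ?_ ?_ ?_
  · rw [← mem_degreeLT]
    refine Submodule.sum_mem _ fun i _ => ?_
    rw [← smul_eq_C_mul]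
    exact Submodule.smul_mem _ _ (mem_degreeLT.2 (hq_deg i))
  · rw [degree_one]
    exact_mod_cast hcard
  · intro i _
    rw [eval_finsetSum, Finset.sum_eq_single i (fun j _ hji => by simp [hq_ne hji.symm])
      (by simp), eval_mul, eval_C, hq_self, inv_mul_cancel₀ (hsimple i), eval_one]

lemma eval_physHermitePoly_mul_gaussFunctional_divByMonic {m : ℕ} {x : ℝ}
    (hx : (physHermitePoly (m + 1)).IsRoot x) :
    (physHermitePoly m).eval x * gaussFunctional (physHermitePoly (m + 1) /ₘ (X - C x)) =
      2 ^ (m + 1) * m.factorial := by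
  set P := physHermitePoly (m + 1)
  set q := P /ₘ (X - C x)
  set c := (physHermitePoly m).eval x
  set r := (physHermitePoly m - C c) /ₘ (X - C x)
  have hq : (X - C x) * q = P := mul_divByMonic_eq_iff_isRoot.2 hx
  have hr : (X - C x) * r = physHermitePoly m - C c :=
    mul_divByMonic_eq_iff_isRoot.2 (by simp [c])
  have hq_deg : q.natDegree = m := by
    rw [natDegree_divByMonic _ (monic_X_sub_C x), natDegree_X_sub_C, natDegree_physHermitePoly,
      Nat.add_sub_cancel]
  have hr_deg : r.natDegree < m + 1 := by
    rw [natDegree_divByMonic _ (monic_X_sub_C x), natDegree_X_sub_C, natDegree_sub_C,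
      natDegree_physHermitePoly]
    omega
  have hq_coeff : q.coeff m = 2 ^ (m + 1) := by
    have hP : P.degree ≠ 0 := by
      rw [(degree_eq_iff_natDegree_eq_of_pos m.succ_pos).2 (natDegree_physHermitePoly _)]
      exact_mod_cast m.succ_ne_zero
    rw [show q.coeff m = q.leadingCoeff by rw [leadingCoeff, hq_deg],
      leadingCoeff_divByMonic_X_sub_C _ hP, leadingCoeff_physHermitePoly]
  have hsplit : q * physHermitePoly m = c • q + r * P := by
    rw [smul_eq_C_mul]
    linear_combination r * hq - q * hr
  have h := congrArg gaussFunctional hsplit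
  rw [map_add, map_smul, smul_eq_mul,
    gaussFunctional_mul_physHermitePoly_of_natDegree_le hq_deg.le,
    gaussFunctional_mul_physHermitePoly_of_natDegree_lt hr_deg, hq_coeff] at h
  linear_combination -h

lemma eval_physHermitePoly_ne_zero_of_isRoot_succ {m : ℕ} {x : ℝ}
    (hx : (physHermitePoly (m + 1)).IsRoot x) : (physHermitePoly m).eval x ≠ 0 := by
  intro h
  have := eval_physHermitePoly_mul_gaussFunctional_divByMonic hx
  rw [h, zero_mul] at this
  exact (by positivity : (0 : ℝ) < 2 ^ (m + 1) * m.factorial).ne this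

lemma eval_derivative_physHermitePoly_succ_ne_zero {m : ℕ} {x : ℝ}
    (hx : (physHermitePoly (m + 1)).IsRoot x) :
    (derivative (physHermitePoly (m + 1))).eval x ≠ 0 := by
  rw [derivative_physHermitePoly_succ]
  simpa using ⟨by positivity, eval_physHermitePoly_ne_zero_of_isRoot_succ hx⟩

lemma gaussFunctional_lagrangeBasis_physHermitePoly {m : ℕ} {x : ℝ}
    (hx : (physHermitePoly (m + 1)).IsRoot x) :
    gaussFunctional (C ((derivative (physHermitePoly (m + 1))).eval x)⁻¹ *
        (physHermitePoly (m + 1) /ₘ (X - C x))) =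
      2 ^ m * (m + 1).factorial / (((m + 1 : ℕ) : ℝ) ^ 2 * (physHermitePoly m).eval x ^ 2) := by
  have hc := eval_physHermitePoly_ne_zero_of_isRoot_succ hx
  have h := eval_physHermitePoly_mul_gaussFunctional_divByMonic hx
  rw [← smul_eq_C_mul, map_smul, smul_eq_mul, derivative_physHermitePoly_succ]
  simp only [eval_mul, eval_ofNat, eval_add, eval_natCast, eval_one, Nat.factorial_succ]
  field_simp
  push_cast
  linear_combination ((m : ℝ) + 1) ^ 2 * h

/-- The Gauss-Hermite quadrature weights `w_j = 2^{n−1} n! √π / (n² H_{n−1}(z_j)²)`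
are positive and sum to `√π`. -/
theorem stmt_12 (n : ℕ) (hn : 1 ≤ n) (z : Fin n → ℝ) (hz : Function.Injective z)
    (hzero : ∀ x : ℝ, physHermite n x = 0 ↔ ∃ j, x = z j)
    (w : Fin n → ℝ)
    (hw : ∀ j, w j = 2 ^ (n - 1) * (n.factorial : ℝ) * Real.sqrt Real.pi /
      ((n : ℝ) ^ 2 * (physHermite (n - 1) (z j)) ^ 2)) :
    (∀ j, 0 < w j) ∧ ∑ j, w j = Real.sqrt Real.pi := by
  obtain ⟨m, rfl⟩ := Nat.exists_eq_add_of_le' hn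
  have hroot (j : Fin (m + 1)) : (physHermitePoly (m + 1)).IsRoot (z j) := by
    simpa [physHermite_eq_eval] using (hzero (z j)).2 ⟨j, rfl⟩
  simp only [Nat.add_sub_cancel, physHermite_eq_eval] at hw
  refine ⟨fun j => ?_, ?_⟩
  · have := eval_physHermitePoly_ne_zero_of_isRoot_succ (hroot j)
    rw [hw]
    positivity
  · have hweight (j : Fin (m + 1)) : w j = Real.sqrt Real.pi * gaussFunctional
        (C ((derivative (physHermitePoly (m + 1))).eval (z j))⁻¹ *
          (physHermitePoly (m + 1) /ₘ (X - C (z j)))) := by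
      rw [hw, gaussFunctional_lagrangeBasis_physHermitePoly (hroot j)]
      ring
    rw [Fintype.sum_congr _ _ hweight, ← Finset.mul_sum, ← map_sum,
      sum_C_inv_eval_derivative_mul_divByMonic_eq_one hz hroot
        (by rw [natDegree_physHermitePoly, Fintype.card_fin])
        fun j => eval_derivative_physHermitePoly_succ_ne_zero (hroot j),
      gaussFunctional_one, mul_one]
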